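/- The function Ω(u) = 4 e^{u/2} ∑_{n=1}^∞ π n² e^{2u} (2π n² e^{2u} − 3) exp(−π n² e^{2u}) is strictly positive for all real u. -/

import Mathlib

open Real

noncomputable def Omega (u : ℝ) : ℝ :=
  4 * Real.exp (u / 2) *
    ∑' n : ℕ, π * ((n : ℝ) + 1) ^ 2 * Real.exp (2 * u) *
      (2 * π * ((n : ℝ) + 1) ^ 2 * Real.exp (2 * u) - 3) *
      Real.exp (-π * ((n : ℝ) + 1) ^ 2 * Real.exp (2 * u))

/-!
Write `θ(a) = ∑_{n ∈ ℤ} e^{-π n² a} = 1 + 2 ∑_{n ≥ 1} e^{-π n² a}`. By the Jacobi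
transformation `θ(1/a) = √a θ(a)` the function `G(u) = e^{u/2} θ(e^{2u})` is even, and
differentiating the series termwise gives `Ω = G'' - G / 4`, so `Ω` is even as well. For `u ≥ 0`
every term of the series defining `Ω` is positive, since `2π n² e^{2u} ≥ 2π > 3`.
-/

theorem Function.Even.iteratedDeriv_neg {𝕜 F : Type*} [NontriviallyNormedField 𝕜]
    [NormedAddCommGroup F] [NormedSpace 𝕜 F] {f : 𝕜 → F} (hf : f.Even) {n : ℕ} (hn : Even n)
    (x : 𝕜) : iteratedDeriv n f (-x) = iteratedDeriv n f x := by
  simpa [hf _, hn.neg_one_pow] using (iteratedDeriv_comp_neg n f x).symm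

theorem hasDerivAt_exp_two_mul (u : ℝ) :
    HasDerivAt (fun u : ℝ => exp (2 * u)) (2 * exp (2 * u)) u := by
  simpa [mul_comm] using ((hasDerivAt_id u).const_mul (2 : ℝ)).exp

theorem hasDerivAt_exp_half (u : ℝ) :
    HasDerivAt (fun u : ℝ => exp (u / 2)) (exp (u / 2) / 2) u := by
  simpa [div_eq_mul_inv, mul_comm] using ((hasDerivAt_id u).div_const (2 : ℝ)).exp

noncomputable def thetaMoment (k : ℕ) (a : ℝ) : ℝ :=
  ∑' n : ℕ, (π * ((n : ℝ) + 1) ^ 2) ^ k * exp (-π * a * ((n : ℝ) + 1) ^ 2)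

theorem summable_thetaMoment (k : ℕ) {a : ℝ} (ha : 0 < a) :
    Summable fun n : ℕ => (π * ((n : ℝ) + 1) ^ 2) ^ k * exp (-π * a * ((n : ℝ) + 1) ^ 2) := by
  have h := (summable_nat_add_iff 1).2
    (summable_pow_mul_exp_neg_nat_mul (2 * k) (mul_pos pi_pos ha))
  refine (h.mul_left (π ^ k)).of_nonneg_of_le (fun n => by positivity) fun n => ?_
  have hn : ((n : ℝ) + 1) ≤ ((n : ℝ) + 1) ^ 2 := by nlinarith [n.cast_nonneg (α := ℝ)]
  have hexp : exp (-π * a * ((n : ℝ) + 1) ^ 2) ≤ exp (-(π * a) * ((n : ℝ) + 1)) :=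
    exp_le_exp.2 (by nlinarith [mul_pos pi_pos ha])
  push_cast
  rw [mul_pow, ← pow_mul, mul_assoc]
  gcongr

theorem hasDerivAt_thetaMoment (k : ℕ) {a : ℝ} (ha : 0 < a) :
    HasDerivAt (thetaMoment k) (-thetaMoment (k + 1) a) a := by
  have hterm (n : ℕ) (x : ℝ) : HasDerivAt
      (fun x => (π * ((n : ℝ) + 1) ^ 2) ^ k * exp (-π * x * ((n : ℝ) + 1) ^ 2))
      (-((π * ((n : ℝ) + 1) ^ 2) ^ (k + 1) * exp (-π * x * ((n : ℝ) + 1) ^ 2))) x := by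
    have hlin : HasDerivAt (fun x : ℝ => -π * x * ((n : ℝ) + 1) ^ 2)
        (-π * ((n : ℝ) + 1) ^ 2) x := by
      simpa using ((hasDerivAt_id x).const_mul (-π)).mul_const (((n : ℝ) + 1) ^ 2)
    exact (hlin.exp.const_mul _).congr_deriv (by ring)
  -- on `(a / 2, ∞)` the derivatives are dominated by the terms of `thetaMoment (k + 1) (a / 2)`
  have key := hasDerivAt_tsum_of_isPreconnected (summable_thetaMoment (k + 1) (half_pos ha))
    isOpen_Ioi (convex_Ioi (a / 2)).isPreconnected (fun n x _ => hterm n x) (fun n x hx => ?_)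
    (half_lt_self ha) (summable_thetaMoment k ha) (half_lt_self ha)
  · rw [thetaMoment, ← tsum_neg]
    exact key
  · have hc : 0 < π * ((n : ℝ) + 1) ^ 2 := by positivity
    have hx : a / 2 < x := hx
    rw [norm_neg, norm_of_nonneg (by positivity)]
    exact mul_le_mul_of_nonneg_left
      (exp_le_exp.2 (by nlinarith [mul_pos hc (sub_pos.2 hx)])) (by positivity)

theorem hasDerivAt_thetaMoment_exp (k : ℕ) (u : ℝ) :
    HasDerivAt (fun u => thetaMoment k (exp (2 * u)))
      (-2 * exp (2 * u) * thetaMoment (k + 1) (exp (2 * u))) u := by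
  refine ((hasDerivAt_thetaMoment k (exp_pos (2 * u))).comp u
    (hasDerivAt_exp_two_mul u)).congr_deriv ?_
  ring

theorem tsum_int_exp_neg_mul_sq {a : ℝ} (ha : 0 < a) :
    ∑' n : ℤ, exp (-π * a * (n : ℝ) ^ 2) = 1 + 2 * thetaMoment 0 a := by
  have hsum : Summable fun n : ℤ => exp (-π * a * (n : ℝ) ^ 2) := by
    simpa [mul_assoc] using summable_pow_mul_jacobiTheta₂_term_bound 0 ha 0
  rw [tsum_int_eq_zero_add_two_mul_tsum_pnat (fun n => by simp) hsum]
  simp only [Int.cast_natCast]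
  rw [tsum_pnat_eq_tsum_succ (f := fun n : ℕ => exp (-π * a * (n : ℝ) ^ 2))]
  simp [thetaMoment]

theorem one_add_two_mul_thetaMoment_zero_inv {a : ℝ} (ha : 0 < a) :
    1 + 2 * thetaMoment 0 a⁻¹ = √a * (1 + 2 * thetaMoment 0 a) := by
  have h := tsum_exp_neg_mul_int_sq (inv_pos.2 ha)
  rw [div_inv_eq_mul, tsum_int_exp_neg_mul_sq (inv_pos.2 ha), tsum_int_exp_neg_mul_sq ha] at h
  rwa [inv_rpow ha.le, one_div, inv_inv, ← sqrt_eq_rpow] at h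

noncomputable def scaledTheta (u : ℝ) : ℝ := exp (u / 2) * (1 + 2 * thetaMoment 0 (exp (2 * u)))

theorem scaledTheta_even : scaledTheta.Even := by
  intro u
  have h := one_add_two_mul_thetaMoment_zero_inv (exp_pos (2 * u))
  rw [← exp_neg, ← exp_half, show 2 * u / 2 = u by ring] at h
  rw [scaledTheta, scaledTheta, show 2 * -u = -(2 * u) by ring, h, ← mul_assoc, ← exp_add]
  ring_nf

theorem deriv_scaledTheta : deriv scaledTheta = fun u => exp (u / 2) *
    ((1 + 2 * thetaMoment 0 (exp (2 * u))) / 2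
      - 4 * exp (2 * u) * thetaMoment 1 (exp (2 * u))) := by
  funext u
  refine (((hasDerivAt_exp_half u).mul
    (((hasDerivAt_thetaMoment_exp 0 u).const_mul 2).const_add 1)).congr_deriv ?_).deriv
  ring

theorem iteratedDeriv_two_scaledTheta (u : ℝ) : iteratedDeriv 2 scaledTheta u = exp (u / 2) *
    ((1 + 2 * thetaMoment 0 (exp (2 * u))) / 4
      - 12 * exp (2 * u) * thetaMoment 1 (exp (2 * u))
      + 8 * exp (2 * u) ^ 2 * thetaMoment 2 (exp (2 * u))) := by
  rw [iteratedDeriv_succ, iteratedDeriv_one, deriv_scaledTheta]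
  have hinner := ((((hasDerivAt_thetaMoment_exp 0 u).const_mul 2).const_add 1).div_const 2).sub
    (((hasDerivAt_exp_two_mul u).const_mul 4).mul (hasDerivAt_thetaMoment_exp 1 u))
  refine (((hasDerivAt_exp_half u).mul hinner).congr_deriv ?_).deriv
  simp only [Pi.sub_apply, Pi.mul_apply]
  ring

theorem hasSum_omega_series {a : ℝ} (ha : 0 < a) :
    HasSum (fun n : ℕ => π * ((n : ℝ) + 1) ^ 2 * a * (2 * π * ((n : ℝ) + 1) ^ 2 * a - 3) *
      exp (-π * ((n : ℝ) + 1) ^ 2 * a))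
      (2 * a ^ 2 * thetaMoment 2 a - 3 * a * thetaMoment 1 a) := by
  refine (((summable_thetaMoment 2 ha).hasSum.mul_left (2 * a ^ 2)).sub
    ((summable_thetaMoment 1 ha).hasSum.mul_left (3 * a))).congr_fun fun n => ?_
  rw [mul_right_comm (-π) a]
  ring

theorem omega_series_term_pos {a : ℝ} (ha : 1 ≤ a) (n : ℕ) :
    0 < π * ((n : ℝ) + 1) ^ 2 * a * (2 * π * ((n : ℝ) + 1) ^ 2 * a - 3) *
      exp (-π * ((n : ℝ) + 1) ^ 2 * a) := by
  have hn : 1 ≤ ((n : ℝ) + 1) ^ 2 * a := one_le_mul_of_one_le_of_one_le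
    (one_le_pow₀ (by linarith [n.cast_nonneg (α := ℝ)])) ha
  have : 3 < 2 * π * ((n : ℝ) + 1) ^ 2 * a := by nlinarith [pi_gt_three]
  have : 0 < a := by linarith
  positivity

theorem Omega_eq_thetaMoment (u : ℝ) : Omega u = 4 * exp (u / 2) *
    (2 * exp (2 * u) ^ 2 * thetaMoment 2 (exp (2 * u))
      - 3 * exp (2 * u) * thetaMoment 1 (exp (2 * u))) := by
  rw [Omega, (hasSum_omega_series (exp_pos (2 * u))).tsum_eq]

theorem Omega_eq_iteratedDeriv_scaledTheta (u : ℝ) :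
    Omega u = iteratedDeriv 2 scaledTheta u - scaledTheta u / 4 := by
  rw [Omega_eq_thetaMoment, iteratedDeriv_two_scaledTheta, scaledTheta]
  ring

theorem Omega_even : Omega.Even := fun u => by
  rw [Omega_eq_iteratedDeriv_scaledTheta, Omega_eq_iteratedDeriv_scaledTheta,
    scaledTheta_even.iteratedDeriv_neg even_two, scaledTheta_even]

theorem Omega_pos_of_nonneg {u : ℝ} (hu : 0 ≤ u) : 0 < Omega u := by
  have ha : 1 ≤ exp (2 * u) := one_le_exp (by linarith)
  have hsum := (hasSum_omega_series (exp_pos (2 * u))).summable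
  exact mul_pos (by positivity)
    (hsum.tsum_pos (fun n => (omega_series_term_pos ha n).le) 0 (omega_series_term_pos ha 0))

/-- `Ω` is strictly positive on all of `ℝ`. -/
theorem Omega_pos (u : ℝ) : 0 < Omega u := by
  rcases le_total 0 u with hu | hu
  · exact Omega_pos_of_nonneg hu
  · rw [← Omega_even]
    exact Omega_pos_of_nonneg (neg_nonneg.2 hu)
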